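/- arXiv:0907.0689 — 3 statements merged into one kernel-verified Lean document; each statement's English description precedes it below -/
import Mathlib

section
/- For any smooth function U(x,t), any smooth c : ℝ → ℝ, and F with F' = c², the identity x·t·(U_tt − ∂_x(c(U)²·U_x)) = D_t(x·t·U_t − x·U) − D_x(x·t·c(U)²·U_x − t·F(U)) holds. -/
/-- Total derivative with respect to the first (spatial) variable. -/
noncomputable def Dx (f : ℝ → ℝ → ℝ) : ℝ → ℝ → ℝ := fun x t => deriv (fun s => f s t) x

/-- Total derivative with respect to the second (time) variable. -/
noncomputable def Dt (f : ℝ → ℝ → ℝ) : ℝ → ℝ → ℝ := fun x t => deriv (fun s => f x s) t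

lemma hasFDerivAt_aux (f : ℝ → ℝ → ℝ) (hf : ContDiff ℝ (⊤ : ℕ∞) (fun p : ℝ × ℝ => f p.1 p.2))
    (x t : ℝ) :
    HasDerivAt (fun s => f s t) (fderiv ℝ (fun p : ℝ × ℝ => f p.1 p.2) (x, t) (1, 0)) x := by
  have h := (hf.differentiable (by simp) (x, t)).hasFDerivAt.comp_hasDerivAt x
    ((hasDerivAt_id x).prodMk (hasDerivAt_const x t))
  exact h

lemma hasFDerivAt_aux' (f : ℝ → ℝ → ℝ) (hf : ContDiff ℝ (⊤ : ℕ∞) (fun p : ℝ × ℝ => f p.1 p.2))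
    (x t : ℝ) :
    HasDerivAt (fun s => f x s) (fderiv ℝ (fun p : ℝ × ℝ => f p.1 p.2) (x, t) (0, 1)) t := by
  have h := (hf.differentiable (by simp) (x, t)).hasFDerivAt.comp_hasDerivAt t
    ((hasDerivAt_const t x).prodMk (hasDerivAt_id t))
  exact h

lemma hasDerivAt_Dx (f : ℝ → ℝ → ℝ) (hf : ContDiff ℝ (⊤ : ℕ∞) (fun p : ℝ × ℝ => f p.1 p.2))
    (x t : ℝ) : HasDerivAt (fun s => f s t) (Dx f x t) x := by
  have h := hasFDerivAt_aux f hf x t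
  have e : Dx f x t = fderiv ℝ (fun p : ℝ × ℝ => f p.1 p.2) (x, t) (1, 0) := h.deriv
  rw [e]; exact h

lemma hasDerivAt_Dt (f : ℝ → ℝ → ℝ) (hf : ContDiff ℝ (⊤ : ℕ∞) (fun p : ℝ × ℝ => f p.1 p.2))
    (x t : ℝ) : HasDerivAt (fun s => f x s) (Dt f x t) t := by
  have h := hasFDerivAt_aux' f hf x t
  have e : Dt f x t = fderiv ℝ (fun p : ℝ × ℝ => f p.1 p.2) (x, t) (0, 1) := h.deriv
  rw [e]; exact h

lemma contDiff_Dx (f : ℝ → ℝ → ℝ) (hf : ContDiff ℝ (⊤ : ℕ∞) (fun p : ℝ × ℝ => f p.1 p.2)) :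
    ContDiff ℝ (⊤ : ℕ∞) (fun p : ℝ × ℝ => Dx f p.1 p.2) := by
  have heq : (fun p : ℝ × ℝ => Dx f p.1 p.2)
      = fun p : ℝ × ℝ => fderiv ℝ (fun p : ℝ × ℝ => f p.1 p.2) p ((1 : ℝ), (0 : ℝ)) := by
    funext p
    exact (hasFDerivAt_aux f hf p.1 p.2).deriv
  rw [heq]
  exact (hf.fderiv_right (by simp)).clm_apply contDiff_const

lemma contDiff_Dt (f : ℝ → ℝ → ℝ) (hf : ContDiff ℝ (⊤ : ℕ∞) (fun p : ℝ × ℝ => f p.1 p.2)) :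
    ContDiff ℝ (⊤ : ℕ∞) (fun p : ℝ × ℝ => Dt f p.1 p.2) := by
  have heq : (fun p : ℝ × ℝ => Dt f p.1 p.2)
      = fun p : ℝ × ℝ => fderiv ℝ (fun p : ℝ × ℝ => f p.1 p.2) p ((0 : ℝ), (1 : ℝ)) := by
    funext p
    exact (hasFDerivAt_aux' f hf p.1 p.2).deriv
  rw [heq]
  exact (hf.fderiv_right (by simp)).clm_apply contDiff_const

/-- Λ = x·t is a conservation law multiplier for the nonlinear wave equation:
    x·t·(U_tt − (c²(U)U_x)_x) = D_t(x·t·U_t − x·U) − D_x(x·t·c²(U)·U_x − t·F(U)), F′ = c². -/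
theorem wave_multiplier_xt (U : ℝ → ℝ → ℝ)
    (hU : ContDiff ℝ (⊤ : ℕ∞) (fun p : ℝ × ℝ => U p.1 p.2))
    (c : ℝ → ℝ) (hc : ContDiff ℝ (⊤ : ℕ∞) c)
    (F : ℝ → ℝ) (hF : ∀ s : ℝ, HasDerivAt F ((c s)^2) s) :
    ∀ x t : ℝ,
      x * t * (Dt (Dt U) x t - Dx (fun x t => (c (U x t))^2 * Dx U x t) x t) =
        Dt (fun x t => x * t * Dt U x t - x * U x t) x t
        - Dx (fun x t => x * t * (c (U x t))^2 * Dx U x t - t * F (U x t)) x t := by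
  intro x t
  have hDtU := contDiff_Dt U hU
  have hDxU := contDiff_Dx U hU
  -- G = c(U)^2 * Ux, jointly smooth
  have hG : ContDiff ℝ (⊤ : ℕ∞) (fun p : ℝ × ℝ => (c (U p.1 p.2))^2 * Dx U p.1 p.2) :=
    ((hc.comp hU).pow 2).mul hDxU
  -- time derivative computation
  have h1 : HasDerivAt (fun s => x * s * Dt U x s - x * U x s)
      (x * t * Dt (Dt U) x t) t := by
    have hA : HasDerivAt (fun s : ℝ => x * s) x t := by
      simpa using (hasDerivAt_id t).const_mul x
    have hB := hasDerivAt_Dt (Dt U) hDtU x t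
    have hC := hasDerivAt_Dt U hU x t
    have := (hA.mul hB).sub (hC.const_mul x)
    refine this.congr_deriv ?_
    ring
  -- space derivative computation
  have h2 : HasDerivAt (fun s => s * t * (c (U s t))^2 * Dx U s t - t * F (U s t))
      (x * t * Dx (fun x t => (c (U x t))^2 * Dx U x t) x t) x := by
    have hst : HasDerivAt (fun s : ℝ => s * t) t x := by
      simpa using (hasDerivAt_id x).mul_const t
    have hGder := hasDerivAt_Dx (fun x t => (c (U x t))^2 * Dx U x t) hG x t
    have hUx := hasDerivAt_Dx U hU x t
    have hFU : HasDerivAt (fun s => F (U s t)) ((c (U x t))^2 * Dx U x t) x :=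
      (hF (U x t)).comp x hUx
    have key := (hst.mul hGder).sub (hFU.const_mul t)
    have heq : (fun s => s * t * (c (U s t))^2 * Dx U s t - t * F (U s t))
        = fun s => (s * t) * ((fun x t => (c (U x t))^2 * Dx U x t) s t) - t * F (U s t) := by
      funext s; ring
    rw [heq]
    refine key.congr_deriv ?_
    beta_reduce
    ring
  have e1 : Dt (fun x t => x * t * Dt U x t - x * U x t) x t = x * t * Dt (Dt U) x t :=
    h1.deriv
  have e2 : Dx (fun x t => x * t * (c (U x t))^2 * Dx U x t - t * F (U x t)) x t
      = x * t * Dx (fun x t => (c (U x t))^2 * Dx U x t) x t := h2.deriv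
  rw [e1, e2]
  ring
end

section
/- Suppose Λ(x,t) is a smooth function of (x,t) only such that for every smooth U(x,t), the expression Λ·(U_tt − ∂_x(c(U)²·U_x)) is annihilated by the Euler operator E_U = ∂/∂U − D_t ∂/∂U_t − D_x ∂/∂U_x + D_t² ∂/∂U_tt + D_t D_x ∂/∂U_tx + D_x² ∂/∂U_xx (with c and c' not identically related, i.e., c arbitrary). Then Λ_xx = Λ_tt = 0, so Λ(x,t) = C₁ + C₂x + C₃t + C₄xt for constants C₁,…,C₄. -/
/-- The Euler operator E_U applied to Λ(x,t)·R[U], where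
    R[U] = U_tt − (c²(U)U_x)_x = U_tt − 2c(U)c′(U)U_x² − c(U)²U_xx,
    evaluated along a smooth function U(x,t):
    E_U(ΛR) = ∂f/∂U − D_x(∂f/∂U_x) − D_t(∂f/∂U_t) + D_t²(∂f/∂U_tt) + D_xD_t(∂f/∂U_tx)
              + D_x²(∂f/∂U_xx)
            = −2Λ(c′² + c c″)U_x² − 2Λ c c′ U_xx + D_x(4Λ c c′ U_x) + Λ_tt − D_x²(Λ c²(U)). -/
noncomputable def waveEuler (Λ : ℝ → ℝ → ℝ) (c : ℝ → ℝ) (U : ℝ → ℝ → ℝ) : ℝ → ℝ → ℝ :=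
  fun x t =>
    Λ x t * (-(2 * ((deriv c (U x t))^2 + c (U x t) * deriv (deriv c) (U x t)))
                * (Dx U x t)^2
             - 2 * c (U x t) * deriv c (U x t) * Dx (Dx U) x t)
    + Dx (fun x t => 4 * Λ x t * c (U x t) * deriv c (U x t) * Dx U x t) x t
    + Dt (Dt Λ) x t
    - Dx (Dx (fun x t => Λ x t * (c (U x t))^2)) x t

/-- waveEuler for constant wave speed `k` and `U ≡ 0` reduces to `Λ_tt − ∂_x²(k²Λ)`. -/
lemma waveEuler_const (Λ : ℝ → ℝ → ℝ) (k : ℝ) (x t : ℝ) :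
    waveEuler Λ (fun _ => k) (fun _ _ => 0) x t
      = Dt (Dt Λ) x t - Dx (Dx (fun x t => Λ x t * k^2)) x t := by
  simp [waveEuler, Dx, Dt, deriv_const']

/-- A smooth function on ℝ with vanishing second derivative is affine. -/
lemma affine_of_deriv2 (g : ℝ → ℝ) (hg : ContDiff ℝ (⊤ : ℕ∞) g)
    (h2 : ∀ x, deriv (deriv g) x = 0) : ∀ x, g x = g 0 + x * deriv g 0 := by
  have hgi : ContDiff ℝ ((⊤ : ℕ∞) : WithTop ℕ∞) g := hg.of_le (by simp)
  have hg' : Differentiable ℝ (deriv g) :=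
    (contDiff_infty_iff_deriv.mp hgi).2.differentiable (by simp)
  have hconst : ∀ x, deriv g x = deriv g 0 := fun x => is_const_of_deriv_eq_zero hg' h2 x 0
  have hd : Differentiable ℝ g := hgi.differentiable (by simp)
  intro x
  set C := deriv g 0 with hC
  have hz : ∀ y, deriv (fun z => g z - z * C) y = 0 := by
    intro y
    rw [deriv_fun_sub (hd y) (by fun_prop)]
    simp [hconst y]
  have hdiff : Differentiable ℝ (fun z => g z - z * C) := hd.sub (by fun_prop)
  have := is_const_of_deriv_eq_zero hdiff hz x 0
  simp at this
  linarith

/-- If Λ(x,t) is a smooth multiplier of the nonlinear wave equation for arbitrary wave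
    speed c, i.e., the Euler operator annihilates Λ·(U_tt − (c²(U)U_x)_x) for every
    smooth c and every smooth U, then Λ_xx = Λ_tt = 0, so Λ = C₁ + C₂x + C₃t + C₄xt. -/
theorem wave_multiplier_determining (Λ : ℝ → ℝ → ℝ)
    (hΛ : ContDiff ℝ (⊤ : ℕ∞) (fun p : ℝ × ℝ => Λ p.1 p.2))
    (hE : ∀ c : ℝ → ℝ, ContDiff ℝ (⊤ : ℕ∞) c →
      ∀ U : ℝ → ℝ → ℝ, ContDiff ℝ (⊤ : ℕ∞) (fun p : ℝ × ℝ => U p.1 p.2) →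
        ∀ x t : ℝ, waveEuler Λ c U x t = 0) :
    (∀ x t : ℝ, Dx (Dx Λ) x t = 0 ∧ Dt (Dt Λ) x t = 0) ∧
    ∃ C₁ C₂ C₃ C₄ : ℝ, ∀ x t : ℝ, Λ x t = C₁ + C₂ * x + C₃ * t + C₄ * x * t := by
  -- Step 1: use c ≡ 0 to get Λ_tt = 0.
  have htt : ∀ x t : ℝ, Dt (Dt Λ) x t = 0 := by
    intro x t
    have h := hE (fun _ => 0) contDiff_const (fun _ _ => 0) contDiff_const x t
    rw [waveEuler_const] at h
    have hz : (fun (x : ℝ) (t : ℝ) => Λ x t * (0:ℝ)^2) = fun _ _ => (0:ℝ) := by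
      funext x t; ring
    rw [hz] at h
    simpa [Dx] using h
  -- Step 2: use c ≡ 1 to get Λ_xx = 0.
  have hxx : ∀ x t : ℝ, Dx (Dx Λ) x t = 0 := by
    intro x t
    have h := hE (fun _ => 1) contDiff_const (fun _ _ => 0) contDiff_const x t
    rw [waveEuler_const] at h
    have hz : (fun (x : ℝ) (t : ℝ) => Λ x t * (1:ℝ)^2) = Λ := by
      funext x t; ring
    rw [hz, htt x t] at h
    linarith
  refine ⟨fun x t => ⟨hxx x t, htt x t⟩, ?_⟩
  -- smoothness of the partial functions
  have hΛx : ∀ t : ℝ, ContDiff ℝ (⊤ : ℕ∞) (fun s => Λ s t) := fun t =>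
    hΛ.comp (contDiff_id.prodMk contDiff_const)
  have hΛt : ∀ x : ℝ, ContDiff ℝ (⊤ : ℕ∞) (fun s => Λ x s) := fun x =>
    hΛ.comp (contDiff_const.prodMk contDiff_id)
  -- Λ is affine in x for each fixed t
  have haffx : ∀ t x : ℝ, Λ x t = Λ 0 t + x * (Λ 1 t - Λ 0 t) := by
    intro t x
    have h := affine_of_deriv2 (fun s => Λ s t) (hΛx t) (fun y => hxx y t)
    have h1 := h 1
    have hx := h x
    rw [hx]
    have : deriv (fun s => Λ s t) 0 = Λ 1 t - Λ 0 t := by linarith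
    rw [this]
  -- Λ is affine in t for each fixed x
  have hafft : ∀ x t : ℝ, Λ x t = Λ x 0 + t * deriv (fun s => Λ x s) 0 := by
    intro x t
    exact affine_of_deriv2 (fun s => Λ x s) (hΛt x) (fun y => htt x y) t
  -- the t-derivative at 0 is affine in x
  have hdt : ∀ x : ℝ, deriv (fun s => Λ x s) 0
      = deriv (fun s => Λ 0 s) 0 + x * (deriv (fun s => Λ 1 s) 0 - deriv (fun s => Λ 0 s) 0) := by
    intro x
    have ha : DifferentiableAt ℝ (fun s => Λ 0 s) 0 :=
      ((hΛt 0).differentiable (by simp)) 0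
    have hb : DifferentiableAt ℝ (fun s => Λ 1 s) 0 :=
      ((hΛt 1).differentiable (by simp)) 0
    have hrw : (fun s => Λ x s) = fun s => Λ 0 s + x * (Λ 1 s - Λ 0 s) := by
      funext s; exact haffx s x
    have hder : HasDerivAt (fun s => Λ 0 s + x * (Λ 1 s - Λ 0 s))
        (deriv (fun s => Λ 0 s) 0 + x * (deriv (fun s => Λ 1 s) 0 - deriv (fun s => Λ 0 s) 0)) 0 :=
      ha.hasDerivAt.add ((hb.hasDerivAt.sub ha.hasDerivAt).const_mul x)
    rw [hrw]
    exact hder.deriv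
  refine ⟨Λ 0 0, Λ 1 0 - Λ 0 0, deriv (fun s => Λ 0 s) 0,
    deriv (fun s => Λ 1 s) 0 - deriv (fun s => Λ 0 s) 0, fun x t => ?_⟩
  rw [hafft x t, hdt x, haffx 0 x]
  ring
end

section
/- Let g(t,x,y) be a smooth solution of the 2D G-equation g_t = √(g_x² + g_y²) with g_y never zero. Then with Λ[g] = (g_x·g_yy − g_y·g_xy)/g_y³ and η[g] = −t·g_t − x·g_x − y·g_y, the divergence expression D_t(η·Λ) − D_x(η·g_x·Λ/√(g_x²+g_y²)) − D_y(η·g_y·Λ/√(g_x²+g_y²)) equals zero. -/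
/-- Partial derivative with respect to the first variable (t). -/
noncomputable def D1 (f : ℝ → ℝ → ℝ → ℝ) : ℝ → ℝ → ℝ → ℝ :=
  fun t x y => deriv (fun s => f s x y) t

/-- Partial derivative with respect to the second variable (x). -/
noncomputable def D2 (f : ℝ → ℝ → ℝ → ℝ) : ℝ → ℝ → ℝ → ℝ :=
  fun t x y => deriv (fun s => f t s y) x

/-- Partial derivative with respect to the third variable (y). -/
noncomputable def D3 (f : ℝ → ℝ → ℝ → ℝ) : ℝ → ℝ → ℝ → ℝ :=
  fun t x y => deriv (fun s => f t x s) y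

/-- The multiplier Λ[g] = (g_x·g_yy − g_y·g_xy)/g_y³ of the 2D G-equation
    g_t = √(g_x² + g_y²). -/
noncomputable def GLam (g : ℝ → ℝ → ℝ → ℝ) : ℝ → ℝ → ℝ → ℝ :=
  fun t x y => (D2 g t x y * D3 (D3 g) t x y - D3 g t x y * D2 (D3 g) t x y)
                / (D3 g t x y)^3

/-- The evolutionary characteristic η[g] = −t·g_t − x·g_x − y·g_y of the scaling
    symmetry t∂_t + x∂_x + y∂_y. -/
noncomputable def Geta (g : ℝ → ℝ → ℝ → ℝ) : ℝ → ℝ → ℝ → ℝ :=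
  fun t x y => -(t * D1 g t x y) - x * D2 g t x y - y * D3 g t x y

namespace GeqAux

abbrev unc (f : ℝ → ℝ → ℝ → ℝ) : ℝ × ℝ × ℝ → ℝ := fun p => f p.1 p.2.1 p.2.2

noncomputable abbrev e1 : ℝ × ℝ × ℝ := (1,0,0)
noncomputable abbrev e2 : ℝ × ℝ × ℝ := (0,1,0)
noncomputable abbrev e3 : ℝ × ℝ × ℝ := (0,0,1)

variable {f : ℝ → ℝ → ℝ → ℝ}

theorem curve1 (x y t : ℝ) : HasDerivAt (fun s : ℝ => (s, x, y)) e1 t :=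
  (hasDerivAt_id t).prodMk ((hasDerivAt_const t x).prodMk (hasDerivAt_const t y))
theorem curve2 (t y x : ℝ) : HasDerivAt (fun s : ℝ => (t, s, y)) e2 x :=
  (hasDerivAt_const x t).prodMk ((hasDerivAt_id x).prodMk (hasDerivAt_const x y))
theorem curve3 (t x y : ℝ) : HasDerivAt (fun s : ℝ => (t, x, s)) e3 y :=
  (hasDerivAt_const y t).prodMk ((hasDerivAt_const y x).prodMk (hasDerivAt_id y))

theorem D1_eq (hf : ContDiff ℝ (⊤ : ℕ∞) (unc f)) (t x y : ℝ) :
    D1 f t x y = fderiv ℝ (unc f) (t, x, y) e1 :=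
  by have h := ((hf.differentiable (by simp) (t,x,y)).hasFDerivAt.comp_hasDerivAt t (curve1 x y t)).deriv; exact h

theorem D2_eq (hf : ContDiff ℝ (⊤ : ℕ∞) (unc f)) (t x y : ℝ) :
    D2 f t x y = fderiv ℝ (unc f) (t, x, y) e2 :=
  by have h := ((hf.differentiable (by simp) (t,x,y)).hasFDerivAt.comp_hasDerivAt x (curve2 t y x)).deriv; exact h

theorem D3_eq (hf : ContDiff ℝ (⊤ : ℕ∞) (unc f)) (t x y : ℝ) :
    D3 f t x y = fderiv ℝ (unc f) (t, x, y) e3 :=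
  by have h := ((hf.differentiable (by simp) (t,x,y)).hasFDerivAt.comp_hasDerivAt y (curve3 t x y)).deriv; exact h

theorem contDiff_fderiv_apply (hf : ContDiff ℝ (⊤ : ℕ∞) (unc f)) (w : ℝ × ℝ × ℝ) :
    ContDiff ℝ (⊤ : ℕ∞) (fun p : ℝ × ℝ × ℝ => fderiv ℝ (unc f) p w) :=
  (hf.fderiv_right ((by simp))).clm_apply contDiff_const

theorem contDiff_D1 (hf : ContDiff ℝ (⊤ : ℕ∞) (unc f)) : ContDiff ℝ (⊤ : ℕ∞) (unc (D1 f)) := by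
  have : unc (D1 f) = fun p : ℝ × ℝ × ℝ => fderiv ℝ (unc f) p e1 := by
    funext p; exact D1_eq hf p.1 p.2.1 p.2.2
  rw [this]; exact contDiff_fderiv_apply hf e1

theorem contDiff_D2 (hf : ContDiff ℝ (⊤ : ℕ∞) (unc f)) : ContDiff ℝ (⊤ : ℕ∞) (unc (D2 f)) := by
  have : unc (D2 f) = fun p : ℝ × ℝ × ℝ => fderiv ℝ (unc f) p e2 := by
    funext p; exact D2_eq hf p.1 p.2.1 p.2.2
  rw [this]; exact contDiff_fderiv_apply hf e2

theorem contDiff_D3 (hf : ContDiff ℝ (⊤ : ℕ∞) (unc f)) : ContDiff ℝ (⊤ : ℕ∞) (unc (D3 f)) := by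
  have : unc (D3 f) = fun p : ℝ × ℝ × ℝ => fderiv ℝ (unc f) p e3 := by
    funext p; exact D3_eq hf p.1 p.2.1 p.2.2
  rw [this]; exact contDiff_fderiv_apply hf e3

theorem fderiv_fderiv_apply (hf : ContDiff ℝ (⊤ : ℕ∞) (unc f)) (p w v : ℝ × ℝ × ℝ) :
    fderiv ℝ (fun q => fderiv ℝ (unc f) q w) p v
      = fderiv ℝ (fderiv ℝ (unc f)) p v w := by
  have hc : DifferentiableAt ℝ (fderiv ℝ (unc f)) p :=
    ((hf.fderiv_right (m := (⊤ : ℕ∞)) (by simp)).differentiable (by simp)).differentiableAt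
  rw [fderiv_clm_apply hc (differentiableAt_const w)]
  simp

theorem symm_snd (hf : ContDiff ℝ (⊤ : ℕ∞) (unc f)) (p v w : ℝ × ℝ × ℝ) :
    fderiv ℝ (fderiv ℝ (unc f)) p v w = fderiv ℝ (fderiv ℝ (unc f)) p w v :=
  (hf.contDiffAt.isSymmSndFDerivAt (by rw [minSmoothness_of_isRCLikeNormedField]; exact WithTop.coe_le_coe.mpr le_top)) v w

theorem comm23 (hf : ContDiff ℝ (⊤ : ℕ∞) (unc f)) (t x y : ℝ) :
    D3 (D2 f) t x y = D2 (D3 f) t x y := by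
  rw [D3_eq (contDiff_D2 hf), D2_eq (contDiff_D3 hf)]
  have h2 : unc (D2 f) = fun p : ℝ × ℝ × ℝ => fderiv ℝ (unc f) p e2 := by
    funext p; exact D2_eq hf p.1 p.2.1 p.2.2
  have h3 : unc (D3 f) = fun p : ℝ × ℝ × ℝ => fderiv ℝ (unc f) p e3 := by
    funext p; exact D3_eq hf p.1 p.2.1 p.2.2
  rw [h2, h3, fderiv_fderiv_apply hf _ e2 e3, fderiv_fderiv_apply hf _ e3 e2,
    symm_snd hf]

theorem comm12 (hf : ContDiff ℝ (⊤ : ℕ∞) (unc f)) (t x y : ℝ) :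
    D1 (D2 f) t x y = D2 (D1 f) t x y := by
  rw [D1_eq (contDiff_D2 hf), D2_eq (contDiff_D1 hf)]
  have h2 : unc (D2 f) = fun p : ℝ × ℝ × ℝ => fderiv ℝ (unc f) p e2 := by
    funext p; exact D2_eq hf p.1 p.2.1 p.2.2
  have h1 : unc (D1 f) = fun p : ℝ × ℝ × ℝ => fderiv ℝ (unc f) p e1 := by
    funext p; exact D1_eq hf p.1 p.2.1 p.2.2
  rw [h2, h1, fderiv_fderiv_apply hf _ e2 e1, fderiv_fderiv_apply hf _ e1 e2,
    symm_snd hf]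

theorem comm13 (hf : ContDiff ℝ (⊤ : ℕ∞) (unc f)) (t x y : ℝ) :
    D1 (D3 f) t x y = D3 (D1 f) t x y := by
  rw [D1_eq (contDiff_D3 hf), D3_eq (contDiff_D1 hf)]
  have h3 : unc (D3 f) = fun p : ℝ × ℝ × ℝ => fderiv ℝ (unc f) p e3 := by
    funext p; exact D3_eq hf p.1 p.2.1 p.2.2
  have h1 : unc (D1 f) = fun p : ℝ × ℝ × ℝ => fderiv ℝ (unc f) p e1 := by
    funext p; exact D1_eq hf p.1 p.2.1 p.2.2
  rw [h3, h1, fderiv_fderiv_apply hf _ e3 e1, fderiv_fderiv_apply hf _ e1 e3,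
    symm_snd hf]

theorem diff_slice1 (hf : ContDiff ℝ (⊤ : ℕ∞) (unc f)) (t x y : ℝ) :
    DifferentiableAt ℝ (fun s => f s x y) t :=
  by have h := ((hf.differentiable (by simp) (t,x,y)).hasFDerivAt.comp_hasDerivAt t
    (curve1 x y t)).differentiableAt; exact h

theorem diff_slice2 (hf : ContDiff ℝ (⊤ : ℕ∞) (unc f)) (t x y : ℝ) :
    DifferentiableAt ℝ (fun s => f t s y) x :=
  by have h := ((hf.differentiable (by simp) (t,x,y)).hasFDerivAt.comp_hasDerivAt x
    (curve2 t y x)).differentiableAt; exact h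

theorem diff_slice3 (hf : ContDiff ℝ (⊤ : ℕ∞) (unc f)) (t x y : ℝ) :
    DifferentiableAt ℝ (fun s => f t x s) y :=
  by have h := ((hf.differentiable (by simp) (t,x,y)).hasFDerivAt.comp_hasDerivAt y
    (curve3 t x y)).differentiableAt; exact h

theorem half_helper (a b c d s : ℝ) (hs : s ≠ 0) :
    ((2:ℕ) * a ^ (2-1) * b + (2:ℕ) * c ^ (2-1) * d) / (2*s) = (a*b+c*d)/s := by
  push_cast
  rw [pow_one, pow_one]
  field_simp

end GeqAux

set_option maxHeartbeats 4000000

/-- For a smooth solution g of the 2D G-equation with g_y never zero, the scaling-symmetry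
    flux formula yields the conservation law
    D_t(ηΛ) − D_x(η g_x Λ/√(g_x²+g_y²)) − D_y(η g_y Λ/√(g_x²+g_y²)) = 0. -/
theorem Gequation_scaling_conservation_law (g : ℝ → ℝ → ℝ → ℝ)
    (hg : ContDiff ℝ (⊤ : ℕ∞) (fun p : ℝ × ℝ × ℝ => g p.1 p.2.1 p.2.2))
    (hy : ∀ t x y : ℝ, D3 g t x y ≠ 0)
    (hsol : ∀ t x y : ℝ,
      D1 g t x y = Real.sqrt ((D2 g t x y)^2 + (D3 g t x y)^2)) :
    ∀ t x y : ℝ,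
      D1 (fun t x y => Geta g t x y * GLam g t x y) t x y
      - D2 (fun t x y => Geta g t x y * D2 g t x y * GLam g t x y
              / Real.sqrt ((D2 g t x y)^2 + (D3 g t x y)^2)) t x y
      - D3 (fun t x y => Geta g t x y * D3 g t x y * GLam g t x y
              / Real.sqrt ((D2 g t x y)^2 + (D3 g t x y)^2)) t x y = 0 := by
  have hg' : ContDiff ℝ (⊤ : ℕ∞) (GeqAux.unc g) := hg
  have hgu : ContDiff ℝ (⊤ : ℕ∞) (GeqAux.unc (D2 g)) := GeqAux.contDiff_D2 hg'
  have hgv : ContDiff ℝ (⊤ : ℕ∞) (GeqAux.unc (D3 g)) := GeqAux.contDiff_D3 hg'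
  have hgb : ContDiff ℝ (⊤ : ℕ∞) (GeqAux.unc (D2 (D3 g))) := GeqAux.contDiff_D2 hgv
  have hgc : ContDiff ℝ (⊤ : ℕ∞) (GeqAux.unc (D3 (D3 g))) := GeqAux.contDiff_D3 hgv
  have hQ : ∀ t x y : ℝ, (D2 g t x y)^2 + (D3 g t x y)^2 ≠ 0 := fun t x y => by
    have := hy t x y; positivity
  have hSne : ∀ t x y : ℝ, Real.sqrt ((D2 g t x y)^2 + (D3 g t x y)^2) ≠ 0 :=
    fun t x y => by
      have h1 := hy t x y
      have : (0:ℝ) < (D2 g t x y)^2 + (D3 g t x y)^2 := by positivity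
      exact (Real.sqrt_pos.mpr this).ne'
  have hsolf : D1 g
      = fun t x y => Real.sqrt ((D2 g t x y)^2 + (D3 g t x y)^2) :=
    funext fun t => funext fun x => funext fun y => hsol t x y
  -- x-direction slice derivatives
  have Hu2 : ∀ t x y : ℝ, HasDerivAt (fun s => D2 g t s y) (D2 (D2 g) t x y) x :=
    fun t x y => (GeqAux.diff_slice2 hgu t x y).hasDerivAt
  have Hv2 : ∀ t x y : ℝ, HasDerivAt (fun s => D3 g t s y) (D2 (D3 g) t x y) x :=
    fun t x y => (GeqAux.diff_slice2 hgv t x y).hasDerivAt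
  have Hb2 : ∀ t x y : ℝ, HasDerivAt (fun s => D2 (D3 g) t s y) (D2 (D2 (D3 g)) t x y) x :=
    fun t x y => (GeqAux.diff_slice2 hgb t x y).hasDerivAt
  have Hc2 : ∀ t x y : ℝ, HasDerivAt (fun s => D3 (D3 g) t s y) (D2 (D3 (D3 g)) t x y) x :=
    fun t x y => (GeqAux.diff_slice2 hgc t x y).hasDerivAt
  -- y-direction slice derivatives (normalized via Clairaut)
  have Hu3 : ∀ t x y : ℝ, HasDerivAt (fun s => D2 g t x s) (D2 (D3 g) t x y) y := by
    intro t x y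
    have h : HasDerivAt (fun s => D2 g t x s) (D3 (D2 g) t x y) y :=
      (GeqAux.diff_slice3 hgu t x y).hasDerivAt
    rwa [GeqAux.comm23 hg' t x y] at h
  have Hv3 : ∀ t x y : ℝ, HasDerivAt (fun s => D3 g t x s) (D3 (D3 g) t x y) y :=
    fun t x y => (GeqAux.diff_slice3 hgv t x y).hasDerivAt
  have Hb3 : ∀ t x y : ℝ, HasDerivAt (fun s => D2 (D3 g) t x s) (D2 (D3 (D3 g)) t x y) y := by
    intro t x y
    have h : HasDerivAt (fun s => D2 (D3 g) t x s) (D3 (D2 (D3 g)) t x y) y :=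
      (GeqAux.diff_slice3 hgb t x y).hasDerivAt
    rwa [GeqAux.comm23 hgv t x y] at h
  have Hc3 : ∀ t x y : ℝ, HasDerivAt (fun s => D3 (D3 g) t x s) (D3 (D3 (D3 g)) t x y) y :=
    fun t x y => (GeqAux.diff_slice3 hgc t x y).hasDerivAt
  -- sqrt slice derivatives
  have HS2 : ∀ t x y : ℝ, HasDerivAt
      (fun s => Real.sqrt ((D2 g t s y)^2 + (D3 g t s y)^2))
      ((D2 g t x y * D2 (D2 g) t x y + D3 g t x y * D2 (D3 g) t x y)
        / Real.sqrt ((D2 g t x y)^2 + (D3 g t x y)^2)) x := by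
    intro t x y
    have h := (((Hu2 t x y).pow 2).add ((Hv2 t x y).pow 2)).sqrt (hQ t x y)
    simp only [Pi.add_apply, Pi.pow_apply] at h
    convert h using 1
    rw [GeqAux.half_helper _ _ _ _ _ (hSne t x y)]
  have HS3 : ∀ t x y : ℝ, HasDerivAt
      (fun s => Real.sqrt ((D2 g t x s)^2 + (D3 g t x s)^2))
      ((D2 g t x y * D2 (D3 g) t x y + D3 g t x y * D3 (D3 g) t x y)
        / Real.sqrt ((D2 g t x y)^2 + (D3 g t x y)^2)) y := by
    intro t x y
    have h := (((Hu3 t x y).pow 2).add ((Hv3 t x y).pow 2)).sqrt (hQ t x y)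
    simp only [Pi.add_apply, Pi.pow_apply] at h
    convert h using 1
    rw [GeqAux.half_helper _ _ _ _ _ (hSne t x y)]
  -- t-derivatives of first-order jets
  have E_u1 : ∀ t x y : ℝ, D1 (D2 g) t x y
      = (D2 g t x y * D2 (D2 g) t x y + D3 g t x y * D2 (D3 g) t x y)
        / Real.sqrt ((D2 g t x y)^2 + (D3 g t x y)^2) := by
    intro t x y
    rw [GeqAux.comm12 hg' t x y, hsolf]
    exact (HS2 t x y).deriv
  have E_v1 : ∀ t x y : ℝ, D1 (D3 g) t x y
      = (D2 g t x y * D2 (D3 g) t x y + D3 g t x y * D3 (D3 g) t x y)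
        / Real.sqrt ((D2 g t x y)^2 + (D3 g t x y)^2) := by
    intro t x y
    rw [GeqAux.comm13 hg' t x y, hsolf]
    exact (HS3 t x y).deriv
  have hv1f : D1 (D3 g)
      = fun t x y => (D2 g t x y * D2 (D3 g) t x y + D3 g t x y * D3 (D3 g) t x y)
        / Real.sqrt ((D2 g t x y)^2 + (D3 g t x y)^2) :=
    funext fun t => funext fun x => funext fun y => E_v1 t x y
  intro t x y
  -- t-derivatives of second-order jets at the point
  have e_b1 := ((GeqAux.comm12 hgv t x y).trans
      (congrArg (fun f => D2 f t x y) hv1f)).trans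
    ((((Hu2 t x y).mul (Hb2 t x y)).add ((Hv2 t x y).mul (Hc2 t x y))).div
      (HS2 t x y) (hSne t x y)).deriv
  have e_c1 := ((GeqAux.comm13 hgv t x y).trans
      (congrArg (fun f => D3 f t x y) hv1f)).trans
    ((((Hu3 t x y).mul (Hb3 t x y)).add ((Hv3 t x y).mul (Hc3 t x y))).div
      (HS3 t x y) (hSne t x y)).deriv
  -- t-direction slice HasDerivAt with natural values
  have Hu1 : HasDerivAt (fun s => D2 g s x y) (D1 (D2 g) t x y) t :=
    (GeqAux.diff_slice1 hgu t x y).hasDerivAt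
  have Hv1 : HasDerivAt (fun s => D3 g s x y) (D1 (D3 g) t x y) t :=
    (GeqAux.diff_slice1 hgv t x y).hasDerivAt
  have Hb1 : HasDerivAt (fun s => D2 (D3 g) s x y) (D1 (D2 (D3 g)) t x y) t :=
    (GeqAux.diff_slice1 hgb t x y).hasDerivAt
  have Hc1 : HasDerivAt (fun s => D3 (D3 g) s x y) (D1 (D3 (D3 g)) t x y) t :=
    (GeqAux.diff_slice1 hgc t x y).hasDerivAt
  have HS1 : HasDerivAt (fun s => Real.sqrt ((D2 g s x y)^2 + (D3 g s x y)^2))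
      (((2:ℕ) * D2 g t x y ^ (2-1) * D1 (D2 g) t x y
        + (2:ℕ) * D3 g t x y ^ (2-1) * D1 (D3 g) t x y)
          / (2 * Real.sqrt ((D2 g t x y)^2 + (D3 g t x y)^2))) t :=
    ((Hu1.pow 2).add (Hv1.pow 2)).sqrt (hQ t x y)
  -- function rewrites using the equation
  have F_T : (fun t x y => Geta g t x y * GLam g t x y)
      = fun t x y => (-(t * Real.sqrt ((D2 g t x y)^2 + (D3 g t x y)^2))
          - x * D2 g t x y - y * D3 g t x y)
        * ((D2 g t x y * D3 (D3 g) t x y - D3 g t x y * D2 (D3 g) t x y)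
            / (D3 g t x y)^3) := by
    funext a b c
    simp only [Geta, GLam]
    rw [hsol a b c]
  have F_X : (fun t x y => Geta g t x y * D2 g t x y * GLam g t x y
        / Real.sqrt ((D2 g t x y)^2 + (D3 g t x y)^2))
      = fun t x y => (-(t * Real.sqrt ((D2 g t x y)^2 + (D3 g t x y)^2))
          - x * D2 g t x y - y * D3 g t x y) * D2 g t x y
        * ((D2 g t x y * D3 (D3 g) t x y - D3 g t x y * D2 (D3 g) t x y)
            / (D3 g t x y)^3)
        / Real.sqrt ((D2 g t x y)^2 + (D3 g t x y)^2) := by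
    funext a b c
    simp only [Geta, GLam]
    rw [hsol a b c]
  have F_Y : (fun t x y => Geta g t x y * D3 g t x y * GLam g t x y
        / Real.sqrt ((D2 g t x y)^2 + (D3 g t x y)^2))
      = fun t x y => (-(t * Real.sqrt ((D2 g t x y)^2 + (D3 g t x y)^2))
          - x * D2 g t x y - y * D3 g t x y) * D3 g t x y
        * ((D2 g t x y * D3 (D3 g) t x y - D3 g t x y * D2 (D3 g) t x y)
            / (D3 g t x y)^3)
        / Real.sqrt ((D2 g t x y)^2 + (D3 g t x y)^2) := by
    funext a b c
    simp only [Geta, GLam]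
    rw [hsol a b c]
  -- assemble the three big derivatives
  have HT := ((((hasDerivAt_id t).mul HS1).neg.sub (Hu1.const_mul x)).sub
      (Hv1.const_mul y)).mul
    (((Hu1.mul Hc1).sub (Hv1.mul Hb1)).div (Hv1.pow 3) (pow_ne_zero 3 (hy t x y)))
  have eT := (congrArg (fun f => D1 f t x y) F_T).trans HT.deriv
  have HX := (((((HS2 t x y).const_mul t).neg.sub
      ((hasDerivAt_id x).mul (Hu2 t x y))).sub ((Hv2 t x y).const_mul y)).mul
        (Hu2 t x y) |>.mul
    ((((Hu2 t x y).mul (Hc2 t x y)).sub ((Hv2 t x y).mul (Hb2 t x y))).div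
      ((Hv2 t x y).pow 3) (pow_ne_zero 3 (hy t x y)))).div (HS2 t x y) (hSne t x y)
  have eX := (congrArg (fun f => D2 f t x y) F_X).trans HX.deriv
  have HY := (((((HS3 t x y).const_mul t).neg.sub
      ((Hu3 t x y).const_mul x)).sub ((hasDerivAt_id y).mul (Hv3 t x y))).mul
        (Hv3 t x y) |>.mul
    ((((Hu3 t x y).mul (Hc3 t x y)).sub ((Hv3 t x y).mul (Hb3 t x y))).div
      ((Hv3 t x y).pow 3) (pow_ne_zero 3 (hy t x y)))).div (HS3 t x y) (hSne t x y)
  have eY := (congrArg (fun f => D3 f t x y) F_Y).trans HY.deriv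
  rw [eT, eX, eY, e_b1, e_c1, E_u1 t x y, E_v1 t x y]
  simp only [Pi.add_apply, Pi.sub_apply, Pi.mul_apply, Pi.pow_apply, Pi.neg_apply,
    Pi.div_apply, Pi.inv_apply, id_eq]
  set S := Real.sqrt ((D2 g t x y)^2 + (D3 g t x y)^2) with hSdef
  set U := D2 g t x y with hU
  set V := D3 g t x y with hV'
  set M := D2 (D2 g) t x y with hM
  set B := D2 (D3 g) t x y with hB
  set C := D3 (D3 g) t x y with hC
  set B3 := D2 (D2 (D3 g)) t x y with hB3
  set C3 := D2 (D3 (D3 g)) t x y with hC3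
  set E3 := D3 (D3 (D3 g)) t x y with hE3
  have hV : V ≠ 0 := hy t x y
  have hS0 : S ≠ 0 := hSne t x y
  have hS2 : S^2 = U^2 + V^2 := Real.sq_sqrt (by positivity)
  clear_value S U V M B C B3 C3 E3
  field_simp
  linear_combination (- 2*S^2*U*V^3*C + 2*S^2*V^4*B + 2*S*U*V^3*M*C*t - 2*S*U*V^3*B^2*t + 2*U^2*V^3*M*C*x - 2*U*V^4*B^2*y - 2*U^2*V^3*B^2*x + 2*U*V^4*M*C*y) * hS2
end
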